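/- Let n be a natural number and let A ⊆ B be finite graphs. Then A ≤ₙ B if and only if there is an enumeration b₁, …, b_m of B ∖ A such that, for every i ≤ m, the vertex b_i has at most n neighbours in A ∪ {b₁, …, b_{i−1}}. -/

import Mathlib

/-- `v` has at most `n` neighbours (in the graph `G`) lying in the set `X`. -/
def valencyLE {V : Type*} (G : SimpleGraph V) (v : V) (X : Set V) (n : ℕ) : Prop :=
  {x ∈ X | G.Adj v x}.encard ≤ n

/-- `B` is `n`-open over `A`. -/
def nOpenOver {V : Type*} (G : SimpleGraph V) (n : ℕ) (A B : Set V) : Prop :=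
  ∀ C : Set V, C ⊆ B \ A → C.Finite → C.Nonempty →
    ∃ c ∈ C, valencyLE G c (A ∪ C) n

/-! Openness applied to `C = B ∖ A` gives a vertex that may come last in the enumeration, and the
rest is enumerated recursively. Conversely, in a nonempty `C ⊆ B ∖ A`, the vertex of `C`
enumerated last has its neighbours in `A ∪ C` among `A` and the vertices enumerated before it. -/

section

variable {V : Type*} {G : SimpleGraph V} {n : ℕ} {A : Set V}

theorem valencyLE.mono {v : V} {X Y : Set V} (hY : valencyLE G v Y n)
    (h : ∀ x ∈ X, G.Adj v x → x ∈ Y) : valencyLE G v X n := by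
  refine (Set.encard_mono ?_).trans hY
  exact fun x hx => ⟨h x hx.1 hx.2, hx.2⟩

variable (G n A) in
def IsOpenEnumeration {m : ℕ} (b : Fin m → V) : Prop :=
  ∀ i : Fin m, valencyLE G (b i) (A ∪ b '' {j : Fin m | j < i}) n

theorem Fin.image_snoc_setOf_lt_castSucc {m : ℕ} (b : Fin m → V) (c : V) (i : Fin m) :
    (Fin.snoc b c : Fin (m + 1) → V) '' {j | j < i.castSucc} = b '' {j | j < i} := by
  ext x
  simp [Fin.exists_fin_succ', (Fin.castSucc_lt_last i).asymm]

theorem Fin.image_snoc_setOf_lt_last {m : ℕ} (b : Fin m → V) (c : V) :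
    (Fin.snoc b c : Fin (m + 1) → V) '' {j | j < Fin.last m} = Set.range b := by
  ext x
  simp [Fin.exists_fin_succ']

theorem IsOpenEnumeration.snoc {m : ℕ} {b : Fin m → V} {c : V}
    (hb : IsOpenEnumeration G n A b) (hc : valencyLE G c (A ∪ insert c (Set.range b)) n) :
    IsOpenEnumeration G n A (Fin.snoc b c : Fin (m + 1) → V) := by
  intro i
  induction i using Fin.lastCases with
  | last =>
    rw [Fin.snoc_last, Fin.image_snoc_setOf_lt_last]
    exact hc.mono fun x hx _ => hx.imp_right (Set.mem_insert_of_mem c)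
  | cast i =>
    rw [Fin.snoc_castSucc, Fin.image_snoc_setOf_lt_castSucc]
    exact hb i

theorem exists_isOpenEnumeration {S : Set V} (hS : S.Finite)
    (hopen : ∀ C ⊆ S, C.Finite → C.Nonempty → ∃ c ∈ C, valencyLE G c (A ∪ C) n) :
    ∃ (m : ℕ) (b : Fin m → V), Function.Injective b ∧ Set.range b = S ∧
      IsOpenEnumeration G n A b := by
  induction hk : S.ncard generalizing S with
  | zero =>
    obtain rfl : S = ∅ := (Set.ncard_eq_zero hS).mp hk
    exact ⟨0, Fin.elim0, fun i => i.elim0, Set.range_eq_empty _, fun i => i.elim0⟩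
  | succ k ih =>
    obtain ⟨c, hcS, hc⟩ :=
      hopen S subset_rfl hS (Set.nonempty_of_ncard_ne_zero (hk ▸ k.succ_ne_zero))
    obtain ⟨m, b, hinj, hrange, hb⟩ :=
      ih hS.sdiff (fun C hC => hopen C (hC.trans Set.sdiff_subset))
        (by rw [Set.ncard_sdiff_singleton_of_mem hcS, hk, Nat.add_sub_cancel])
    have hinsert : insert c (Set.range b) = S := by
      rw [hrange, Set.insert_sdiff_singleton, Set.insert_eq_of_mem hcS]
    refine ⟨m + 1, Fin.snoc b c, Fin.snoc_injective_of_injective hinj ?_, ?_, hb.snoc (hinsert ▸ hc)⟩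
    · rw [hrange]
      exact fun h => h.2 rfl
    · rw [Fin.range_snoc, hinsert]

theorem IsOpenEnumeration.exists_valencyLE {m : ℕ} {b : Fin m → V}
    (hb : IsOpenEnumeration G n A b) {C : Set V} (hC : C ⊆ Set.range b) (hne : C.Nonempty) :
    ∃ c ∈ C, valencyLE G c (A ∪ C) n := by
  obtain ⟨i, hiC, himax⟩ := Set.exists_max_image (b ⁻¹' C) id (Set.toFinite _) (hne.preimage' hC)
  refine ⟨b i, hiC, (hb i).mono ?_⟩
  rintro x (hxA | hxC) hadj
  · exact Or.inl hxA
  · obtain ⟨j, rfl⟩ := hC hxC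
    exact Or.inr ⟨j, (himax j hxC).lt_of_ne (ne_of_apply_ne b (G.ne_of_adj hadj)).symm, rfl⟩

end

theorem stmt4_general {V : Type*} (G : SimpleGraph V) (n : ℕ) (A B : Set V)
    (hBfin : B.Finite) :
    nOpenOver G n A B ↔
      ∃ (m : ℕ) (b : Fin m → V), Function.Injective b ∧
        Set.range b = B \ A ∧
        ∀ i : Fin m,
          valencyLE G (b i) (A ∪ (b '' {j : Fin m | j < i})) n := by
  constructor
  · exact exists_isOpenEnumeration hBfin.sdiff
  · rintro ⟨m, b, -, hrange, hb⟩ C hC - hne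
    exact IsOpenEnumeration.exists_valencyLE (G := G) hb (hrange ▸ hC) hne

theorem stmt4 {V : Type*} (G : SimpleGraph V) (n : ℕ) (A B : Set V)
    (hAB : A ⊆ B) (hBfin : B.Finite) :
    nOpenOver G n A B ↔
      ∃ (m : ℕ) (b : Fin m → V), Function.Injective b ∧
        Set.range b = B \ A ∧
        ∀ i : Fin m,
          valencyLE G (b i) (A ∪ (b '' {j : Fin m | j < i})) n :=
  stmt4_general G n A B hBfin
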